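/- Detection of anticommuting Pauli deviations by single-qubit traps: Let n ≥ 1, let G be a unitary 2^n × 2^n complex matrix, let q : Fin n, and let ψ ∈ ℂ^(2^n) satisfy (Gᴴ · Z_q · G) ψ = ψ. Let E be a 2^n × 2^n matrix anticommuting with Z_q (i.e. Z_q · E = − E · Z_q). Then the computational-basis measurement of qubit q of the deviated state E · G ψ yields outcome 1 with certainty: Π_q^0 (E · G ψ) = 0, i.e. the trap is deterministically triggered. -/
import Mathlib


open Matrix Finset

/-- The four single-qubit Pauli matrices: identity, X, Y, Z. -/
noncomputable def pauli : Fin 4 → Matrix (Fin 2) (Fin 2) ℂ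
  | 0 => 1
  | 1 => !![0, 1; 1, 0]
  | 2 => !![0, -Complex.I; Complex.I, 0]
  | 3 => !![1, 0; 0, -1]

/-- The `n`-qubit Pauli string associated to `f : Fin n → Fin 4`. -/
noncomputable def PauliString (n : ℕ) (f : Fin n → Fin 4) :
    Matrix (Fin n → Fin 2) (Fin n → Fin 2) ℂ :=
  fun x y => ∏ i, pauli (f i) (x i) (y i)
/-- The `n`-qubit Pauli string with a `Z` at position `q` and identity elsewhere. -/
noncomputable def Ztrap (n : ℕ) (q : Fin n) :
    Matrix (Fin n → Fin 2) (Fin n → Fin 2) ℂ :=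
  PauliString n (fun i => if i = q then 3 else 0)

/-- The projector onto computational basis vectors whose `q`-th bit equals `b`. -/
noncomputable def projBit (n : ℕ) (q : Fin n) (b : Fin 2) :
    Matrix (Fin n → Fin 2) (Fin n → Fin 2) ℂ :=
  Matrix.diagonal (fun x => if x q = b then 1 else 0)

lemma pauli_diag_zero (a : Fin 4) (ha : a = 0 ∨ a = 3) (i j : Fin 2) (h : i ≠ j) :
    pauli a i j = 0 := by
  rcases ha with rfl | rfl <;> fin_cases i <;> fin_cases j <;> simp_all [pauli, Matrix.one_apply]

lemma Ztrap_eq (n : ℕ) (q : Fin n) :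
    Ztrap n q = Matrix.diagonal (fun x => if x q = 0 then 1 else -1) := by
  ext x y
  unfold Ztrap PauliString
  by_cases hxy : x = y
  · subst hxy
    rw [Matrix.diagonal_apply_eq,
      Finset.prod_eq_single q (fun i _ hi => by simp [if_neg hi, pauli, Matrix.one_apply])
        (by simp)]
    simp only [if_pos rfl]
    have h2 : ∀ b : Fin 2, b = 0 ∨ b = 1 := by decide
    rcases h2 (x q) with h | h <;> simp [pauli, h]
  · rw [Matrix.diagonal_apply_ne _ hxy]
    obtain ⟨i, hi⟩ : ∃ i, x i ≠ y i := by
      by_contra h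
      push_neg at h
      exact hxy (funext h)
    exact Finset.prod_eq_zero (Finset.mem_univ i)
      (pauli_diag_zero _ (by by_cases h : i = q <;> simp [h]) _ _ hi)

lemma two_smul_projBit (n : ℕ) (q : Fin n) :
    (2 : ℂ) • projBit n q 0 = 1 + Ztrap n q := by
  rw [Ztrap_eq]
  ext x y
  by_cases hxy : x = y
  · subst hxy
    simp only [projBit, Matrix.smul_apply, Matrix.diagonal_apply_eq, Matrix.add_apply,
      Matrix.one_apply_eq]
    by_cases h : x q = 0 <;> simp [h] <;> ring
  · simp [projBit, Matrix.diagonal_apply_ne _ hxy, Matrix.one_apply_ne hxy]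

/-- **Detection of anticommuting Pauli deviations by single-qubit traps**: if `G`
is unitary, `ψ` is a `+1` eigenvector of `G† Z_q G`, and the deviation `E`
anticommutes with `Z_q`, then measuring qubit `q` of the deviated state `E G ψ`
yields outcome `1` with certainty: the component on outcome `0` vanishes. -/
theorem anticommuting_deviation_detected (n : ℕ) (hn : 1 ≤ n)
    (G : Matrix (Fin n → Fin 2) (Fin n → Fin 2) ℂ)
    (hG : G ∈ Matrix.unitaryGroup (Fin n → Fin 2) ℂ)
    (q : Fin n) (ψ : (Fin n → Fin 2) → ℂ)
    (hψ : (Gᴴ * Ztrap n q * G).mulVec ψ = ψ)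
    (E : Matrix (Fin n → Fin 2) (Fin n → Fin 2) ℂ)
    (hE : Ztrap n q * E = -(E * Ztrap n q)) :
    (projBit n q 0).mulVec (E.mulVec (G.mulVec ψ)) = 0 := by
  have hGG : G * Gᴴ = 1 := hG.2
  have hZv : (Ztrap n q).mulVec (G.mulVec ψ) = G.mulVec ψ := by
    have h := congrArg (G.mulVec) hψ
    rw [Matrix.mulVec_mulVec] at h
    have h2 : G * (Gᴴ * Ztrap n q * G) = Ztrap n q * G := by
      rw [← mul_assoc, ← mul_assoc, hGG, one_mul]
    rw [h2, ← Matrix.mulVec_mulVec] at h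
    exact h
  have hZE : (Ztrap n q).mulVec (E.mulVec (G.mulVec ψ)) = -(E.mulVec (G.mulVec ψ)) := by
    rw [Matrix.mulVec_mulVec, hE, Matrix.neg_mulVec, ← Matrix.mulVec_mulVec, hZv]
  have key : (2 : ℂ) • ((projBit n q 0).mulVec (E.mulVec (G.mulVec ψ))) = 0 := by
    rw [← Matrix.smul_mulVec, two_smul_projBit, Matrix.add_mulVec, Matrix.one_mulVec, hZE]
    simp
  rcases smul_eq_zero.mp key with h | h
  · norm_num at h
  · exact h
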